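/- Let A = {0, 1, …, m} with m ≥ 1 and its usual order, and let ℓ ≥ 2. Then the word w₀ = m · (m−1) · m^{ℓ−2} (the letter m, followed by the letter m−1, followed by ℓ−2 copies of the letter m; so |w₀| = ℓ) is Nyldon, and every Nyldon word u with |u| ≤ ℓ satisfies u ≤_lex w₀. -/

import Mathlib

/-!
Common definitions: words over a totally ordered alphabet, lexicographic order,
Nyldon and Lyndon words, Nyldon-like sets, right Hall sets, and (circular) codes.
-/

/-- Strict lexicographic order on words: `u <_lex v` iff `u` is a proper prefix of `v`,
or `u` and `v` first differ at a position where `u` has the smaller letter. -/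
def LexLt {A : Type*} [LinearOrder A] (u v : List A) : Prop :=
  List.Lex (· < ·) u v

/-- Nonstrict lexicographic order on words. -/
def LexLe {A : Type*} [LinearOrder A] (u v : List A) : Prop :=
  u = v ∨ LexLt u v

theorem length_le_length_flatten_of_ne_nil {A : Type*} {s : List (List A)}
    (h : ∀ g ∈ s, g ≠ []) : s.length ≤ s.flatten.length := by
  induction s with
  | nil => simp
  | cons a t ih =>
    simp only [List.flatten_cons, List.length_append, List.length_cons]
    have ha : 1 ≤ a.length := List.length_pos_iff.mpr (h a (by simp))
    have ht := ih (fun g hg => h g (List.mem_cons_of_mem _ hg))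
    omega

theorem length_lt_length_flatten {A : Type*} {f : List A} {fs : List (List A)}
    (h2 : 2 ≤ fs.length) (hne : ∀ g ∈ fs, g ≠ []) (hf : f ∈ fs) :
    f.length < fs.flatten.length := by
  obtain ⟨s, t, rfl⟩ := List.append_of_mem hf
  have hs : s.length ≤ s.flatten.length :=
    length_le_length_flatten_of_ne_nil (fun g hg => hne g (by simp [hg]))
  have ht : t.length ≤ t.flatten.length :=
    length_le_length_flatten_of_ne_nil (fun g hg => hne g (by simp [hg]))
  have hlen : 2 ≤ s.length + t.length + 1 := by
    simp only [List.length_append, List.length_cons] at h2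
    omega
  have hj : (s ++ f :: t).flatten.length
      = s.flatten.length + f.length + t.flatten.length := by
    simp [List.flatten_append]
    omega
  omega

/-- A nonempty word is Nyldon if it admits no factorization into at least two
lexicographically nondecreasing Nyldon words. (Single letters are Nyldon vacuously,
since they admit no factorization into at least two nonempty words at all.) -/
def IsNyldon {A : Type*} [LinearOrder A] (w : List A) : Prop :=
  w ≠ [] ∧ ∀ fs : List (List A), 2 ≤ fs.length → (∀ g ∈ fs, g ≠ []) →
    fs.flatten = w → (∀ f ∈ fs, IsNyldon f) → fs.Chain' LexLe → False
termination_by w.length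
decreasing_by
  rename_i h2 hne hjoin hf
  subst hjoin
  exact length_lt_length_flatten h2 hne hf

/-- A nonempty word is Lyndon if it admits no factorization into at least two
lexicographically nonincreasing Lyndon words. -/
def IsLyndon {A : Type*} [LinearOrder A] (w : List A) : Prop :=
  w ≠ [] ∧ ∀ fs : List (List A), 2 ≤ fs.length → (∀ g ∈ fs, g ≠ []) →
    fs.flatten = w → (∀ f ∈ fs, IsLyndon f) →
    fs.Chain' (fun u v => LexLe v u) → False
termination_by w.length
decreasing_by
  rename_i h2 hne hjoin hf
  subst hjoin
  exact length_lt_length_flatten h2 hne hf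

/-- `fs` is a Nyldon factorization of `w`: a nondecreasing (under `≤_lex`) sequence
of Nyldon words whose concatenation is `w`. -/
def IsNyldonFactorization {A : Type*} [LinearOrder A] (fs : List (List A)) (w : List A) :
    Prop :=
  (∀ f ∈ fs, IsNyldon f) ∧ fs.Chain' LexLe ∧ fs.flatten = w

/-- The `j`-th power `u^j` of a word `u`: the concatenation of `j` copies of `u`. -/
def wordPow {A : Type*} (u : List A) (j : ℕ) : List A :=
  (List.replicate j u).flatten

/-- A word is primitive if it is not a power `u^j` of a word `u` with `j ≥ 2`. -/
def Primitive {A : Type*} (w : List A) : Prop :=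
  ∀ (u : List A) (j : ℕ), 2 ≤ j → w ≠ wordPow u j

/-- A Nyldon-like set over the alphabet `A`: a set `Mem` of nonempty words together with a
strict total order `lt` on it, such that every single letter is in the set, a word of length
at least `2` is in the set iff it admits no factorization into at least two nondecreasing
words of the set, and `f ≺ fg` whenever `f`, `g`, `fg` are all in the set. -/
structure NyldonLike (A : Type*) where
  /-- membership in `G` -/
  Mem : List A → Prop
  /-- the strict total order `≺` on `G` -/
  lt : List A → List A → Prop
  mem_ne_nil : ∀ w, Mem w → w ≠ []
  lt_irrefl : ∀ u, Mem u → ¬ lt u u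
  lt_trans : ∀ u v x, Mem u → Mem v → Mem x → lt u v → lt v x → lt u x
  lt_total : ∀ u v, Mem u → Mem v → lt u v ∨ u = v ∨ lt v u
  singleton_mem : ∀ a : A, Mem [a]
  mem_iff : ∀ w : List A, 2 ≤ w.length →
    (Mem w ↔ ¬ ∃ fs : List (List A), 2 ≤ fs.length ∧ (∀ f ∈ fs, Mem f) ∧
      fs.Chain' (fun u v => u = v ∨ lt u v) ∧ fs.flatten = w)
  append_lt : ∀ f g, Mem f → Mem g → Mem (f ++ g) → lt f (f ++ g)

namespace NyldonLike

variable {A : Type*}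

/-- The nonstrict order `⪯` associated to a Nyldon-like set. -/
def le (G : NyldonLike A) (u v : List A) : Prop :=
  u = v ∨ G.lt u v

/-- `fs` is a `G`-factorization of `w`: a nondecreasing (under `⪯`) sequence of
`G`-words whose concatenation is `w`. -/
def IsFactorization (G : NyldonLike A) (fs : List (List A)) (w : List A) : Prop :=
  (∀ f ∈ fs, G.Mem f) ∧ fs.Chain' G.le ∧ fs.flatten = w

end NyldonLike

/-- A factorization `fs` of a word written as the concatenation of `blocks` preserves the
blocks if each factor is the concatenation of a (nonempty) consecutive run of whole blocks. -/
def PreservesBlocks {A : Type*} (blocks fs : List (List A)) : Prop :=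
  ∃ P : List (List (List A)), (∀ p ∈ P, p ≠ []) ∧ P.flatten = blocks ∧
    P.map List.flatten = fs

/-- A right Hall set over the alphabet `A`: a set `Mem` of nonempty words with a strict
total order `lt` such that every nonempty word has a unique nondecreasing factorization
into words of the set, and `fg ≻ g` whenever `f`, `g`, `fg` are all in the set. -/
structure RightHallSet (A : Type*) where
  /-- membership in `H` -/
  Mem : List A → Prop
  /-- the strict total order `≺` on `H` -/
  lt : List A → List A → Prop
  mem_ne_nil : ∀ w, Mem w → w ≠ []
  lt_irrefl : ∀ u, Mem u → ¬ lt u u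
  lt_trans : ∀ u v x, Mem u → Mem v → Mem x → lt u v → lt v x → lt u x
  lt_total : ∀ u v, Mem u → Mem v → lt u v ∨ u = v ∨ lt v u
  unique_factorization : ∀ w : List A, w ≠ [] →
    ∃! fs : List (List A), (∀ f ∈ fs, Mem f) ∧
      fs.Chain' (fun u v => u = v ∨ lt u v) ∧ fs.flatten = w
  append_gt : ∀ f g, Mem f → Mem g → Mem (f ++ g) → lt g (f ++ g)

/-- A set `F` of words is a code if any two sequences of words of `F` with equal
concatenations are equal. -/
def IsCode {A : Type*} (F : List A → Prop) : Prop :=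
  ∀ l₁ l₂ : List (List A), (∀ f ∈ l₁, F f) → (∀ f ∈ l₂, F f) →
    l₁.flatten = l₂.flatten → l₁ = l₂

/-- `w ∈ F*`: `w` is a concatenation of (zero or more) words of `F`. -/
def CodeStar {A : Type*} (F : List A → Prop) (w : List A) : Prop :=
  ∃ l : List (List A), (∀ f ∈ l, F f) ∧ l.flatten = w

/-- A set `F` of words is a circular code if it is a code and whenever
`uv ∈ F*` and `vu ∈ F*`, also `u ∈ F*` and `v ∈ F*`. -/
def IsCircularCode {A : Type*} (F : List A → Prop) : Prop :=
  IsCode F ∧ ∀ u v : List A, CodeStar F (u ++ v) → CodeStar F (v ++ u) → CodeStar F u ∧ CodeStar F v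

/-!
A Nyldon word never starts with a square `aa` of a letter: splitting off the first letter and
factoring the rest gives a nondecreasing Nyldon factorization `[a] ≤ f₁ ≤ ⋯`. So if `⊤` is the
largest letter and `p ⋖ ⊤`, a Nyldon word starting with `⊤` continues with a letter `≤ p`, and
it is `≤_lex ⊤ p ⊤ⁿ` once its length is at most `n + 2`. Conversely, in a nondecreasing
factorization of `⊤ p ⊤ⁿ` the second factor must start with `⊤`, hence lies inside `⊤ⁿ` and
so equals `[⊤]`, which is a proper prefix of the first factor: a contradiction.
-/

variable {A : Type*} [LinearOrder A]

theorem isNyldon_iff (w : List A) :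
    IsNyldon w ↔ w ≠ [] ∧ ∀ fs : List (List A), 2 ≤ fs.length → (∀ g ∈ fs, g ≠ []) →
      fs.flatten = w → (∀ f ∈ fs, IsNyldon f) → fs.IsChain LexLe → False := by
  rw [IsNyldon]
  rfl

theorem IsNyldon.ne_nil {w : List A} (h : IsNyldon w) : w ≠ [] :=
  ((isNyldon_iff w).mp h).1

theorem isNyldon_singleton (a : A) : IsNyldon [a] := by
  refine (isNyldon_iff _).mpr ⟨List.cons_ne_nil _ _, fun fs h2 hne hfl _ _ => ?_⟩
  have := length_le_length_flatten_of_ne_nil hne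
  rw [hfl, List.length_singleton] at this
  omega

theorem exists_isNyldonFactorization {w : List A} (hw : w ≠ []) :
    ∃ fs, fs ≠ [] ∧ IsNyldonFactorization fs w := by
  by_cases h : IsNyldon w
  · exact ⟨[w], List.cons_ne_nil _ _, by simpa using h, List.isChain_singleton _, by simp⟩
  · rw [isNyldon_iff] at h
    push Not at h
    obtain ⟨fs, -, -, hfl, hf, hc⟩ := h hw
    exact ⟨fs, by rintro rfl; exact hw hfl.symm, hf, hc.1, hfl⟩

theorem not_isNyldon_cons_cons (a : A) (v : List A) : ¬ IsNyldon (a :: a :: v) := by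
  intro h
  obtain ⟨fs, hfs, hf, hc, hfl⟩ := exists_isNyldonFactorization (List.cons_ne_nil a v)
  obtain ⟨f, rest, rfl⟩ := List.exists_cons_of_ne_nil hfs
  obtain ⟨x, t, rfl⟩ := List.exists_cons_of_ne_nil (hf f (by simp)).ne_nil
  obtain ⟨rfl, hfl⟩ : x = a ∧ t ++ rest.flatten = v := by simpa using hfl
  have hsingle_le : LexLe [x] (x :: t) := by
    cases t with
    | nil => exact Or.inl rfl
    | cons _ _ => exact Or.inr (List.Lex.cons List.Lex.nil)
  refine ((isNyldon_iff _).mp h).2 ([x] :: (x :: t) :: rest) (by simp) ?_ (by simp [hfl]) ?_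
    (List.isChain_cons_cons.mpr ⟨hsingle_le, hc⟩)
  · rintro g (_ | ⟨_, hg⟩)
    · exact List.cons_ne_nil _ _
    · exact (hf g hg).ne_nil
  · rintro g (_ | ⟨_, hg⟩)
    · exact isNyldon_singleton x
    · exact hf g hg

theorem LexLe.cons {u v : List A} (a : A) (h : LexLe u v) : LexLe (a :: u) (a :: v) :=
  h.imp (congrArg _) List.Lex.cons

section OrderTop

variable [OrderTop A]

theorem lexLe_replicate_top {s : List A} {n : ℕ} (h : s.length ≤ n) :
    LexLe s (List.replicate n ⊤) := by
  induction s generalizing n with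
  | nil =>
    cases n with
    | zero => exact Or.inl rfl
    | succ k => exact Or.inr List.Lex.nil
  | cons c s ih =>
    obtain ⟨k, rfl⟩ : ∃ k, n = k + 1 := ⟨n - 1, by simp at h; omega⟩
    rcases (le_top : c ≤ ⊤).lt_or_eq with hlt | rfl
    · exact Or.inr (List.Lex.rel hlt)
    · exact (ih (by simpa using h)).cons _

theorem exists_eq_top_cons_of_lexLe {t v : List A} (h : LexLe (⊤ :: t) v) (hv : v ≠ []) :
    ∃ s, v = ⊤ :: s := by
  obtain ⟨y, s, rfl⟩ := List.exists_cons_of_ne_nil hv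
  rcases h with he | hl
  · exact ⟨t, he.symm⟩
  · cases hl with
    | cons _ => exact ⟨s, rfl⟩
    | rel h' => exact absurd h' not_top_lt

theorem isNyldon_top_cons_cons_replicate_top {p : A} (hp : p ≠ ⊤) (n : ℕ) :
    IsNyldon (⊤ :: p :: List.replicate n ⊤) := by
  refine (isNyldon_iff _).mpr ⟨List.cons_ne_nil _ _, fun fs h2 hne hfl hnyl hch => ?_⟩
  obtain ⟨f₁, f₂, rest, rfl⟩ : ∃ f₁ f₂ rest, fs = f₁ :: f₂ :: rest := by
    match fs, h2 with
    | f₁ :: f₂ :: rest, _ => exact ⟨f₁, f₂, rest, rfl⟩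
  obtain ⟨x, t, rfl⟩ := List.exists_cons_of_ne_nil (hne f₁ (by simp))
  obtain ⟨rfl, hrest⟩ : x = ⊤ ∧ t ++ (f₂ ++ rest.flatten) = p :: List.replicate n ⊤ := by
    simpa using hfl
  have hle := (List.isChain_cons_cons.mp hch).1
  obtain ⟨s, rfl⟩ := exists_eq_top_cons_of_lexLe hle (hne f₂ (by simp))
  cases t with
  | nil => exact hp (List.cons_eq_cons.mp hrest).1.symm
  | cons z t =>
    have htop : ∀ b ∈ s, b = ⊤ := fun b hb => List.eq_of_mem_replicate <| by
      rw [← (List.cons_eq_cons.mp hrest).2]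
      simp [hb]
    cases s with
    | cons d s =>
      rw [htop d (by simp)] at hnyl
      exact not_isNyldon_cons_cons _ _ (hnyl (⊤ :: ⊤ :: s) (by simp))
    | nil =>
      rcases hle with he | hl
      · simp at he
      · cases hl with
        | cons h' => cases h'
        | rel h' => exact lt_irrefl _ h'

theorem IsNyldon.lexLe_top_cons_cons_replicate_top {p : A} (hp : p ⋖ ⊤) {n : ℕ} {u : List A}
    (hu : IsNyldon u) (hlen : u.length ≤ n + 2) :
    LexLe u (⊤ :: p :: List.replicate n ⊤) := by
  obtain ⟨a, t, rfl⟩ := List.exists_cons_of_ne_nil hu.ne_nil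
  rcases (le_top : a ≤ ⊤).lt_or_eq with ha | rfl
  · exact Or.inr (List.Lex.rel ha)
  refine LexLe.cons _ ?_
  cases t with
  | nil => exact Or.inr List.Lex.nil
  | cons b s =>
    rcases (le_top : b ≤ ⊤).lt_or_eq with hb | rfl
    · rcases (hp.le_of_lt hb).lt_or_eq with hbp | rfl
      · exact Or.inr (List.Lex.rel hbp)
      · exact (lexLe_replicate_top (by simpa using hlen)).cons _
    · exact absurd hu (not_isNyldon_cons_cons _ s)

end OrderTop

/-- Over `A = {0, 1, …, m}` with `m ≥ 1`, for `ℓ ≥ 2` the word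
`w₀ = m (m-1) m^{ℓ-2}` is Nyldon, and it is lexicographically largest among Nyldon words of
length at most `ℓ`. -/
theorem stmt_16 (m ℓ : ℕ) (hm : 1 ≤ m) :
    IsNyldon (Fin.last m :: (⟨m - 1, by omega⟩ : Fin (m + 1)) ::
        List.replicate (ℓ - 2) (Fin.last m)) ∧
      ∀ u : List (Fin (m + 1)), IsNyldon u → u.length ≤ ℓ →
        LexLe u (Fin.last m :: (⟨m - 1, by omega⟩ : Fin (m + 1)) ::
          List.replicate (ℓ - 2) (Fin.last m)) := by
  have hcov : (⟨m - 1, by omega⟩ : Fin (m + 1)) ⋖ ⊤ :=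
    ⟨by simp [Fin.lt_def]; omega, fun c h₁ h₂ => by
      simp only [Fin.lt_def, Fin.top_eq_last, Fin.val_last] at h₁ h₂; omega⟩
  exact ⟨isNyldon_top_cons_cons_replicate_top hcov.ne _,
    fun u hu hlen => hu.lexLe_top_cons_cons_replicate_top hcov (by omega)⟩
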